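/- arXiv:1012.3010 — 5 statements merged into one kernel-verified Lean document; each statement's English description precedes it below -/
import Mathlib

section
/- Let S be a local ring with maximal ideal 𝔫, (x,y) a pair of exact zero-divisors, and M a finitely generated S-module with x·M = 0. If Tor_n^S(S/(x), M) = 0 for all sufficiently large n, then M = 0. -/
/-!
Tensoring `0 → S/(y) --x--> S → S/(x) → 0` with a projective resolution of `M` and using
`Tor_{n+1}(S, M) = 0`, the connecting maps `Tor_{n+1}(S/(x), M) → Tor_n(S/(y), M)` are surjective
for `n ≥ 1`, and also for `n = 0` because `x • M = 0` kills `S/(y) ⊗ M → S ⊗ M`. Alternating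
with the roles of `x` and `y` exchanged, the vanishing of one odd `Tor_{2k+1}(S/(x), M)`
descends to `Tor_0(S/(y), M) = M/yM`, so `M = yM` and Nakayama's lemma gives `M = 0`.
-/

open CategoryTheory Limits MonoidalCategory

namespace CategoryTheory

variable {C D : Type*} [Category* C] [Category* D] [Abelian C] [HasProjectiveResolutions C]
  [Abelian D]

lemma NatTrans.leftDerived_zero_app_comp_fromLeftDerivedZero {F G : C ⥤ D} [F.Additive]
    [G.Additive] (α : F ⟶ G) (X : C) :
    (NatTrans.leftDerived α 0).app X ≫ G.fromLeftDerivedZero.app X =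
      F.fromLeftDerivedZero.app X ≫ α.app X := by
  let P := projectiveResolution X
  have hopcycles : HomologicalComplex.opcyclesMap
      ((NatTrans.mapHomologicalComplex α _).app P.complex) 0 ≫ P.fromLeftDerivedZero' G =
        P.fromLeftDerivedZero' F ≫ α.app X := by
    rw [← cancel_epi (HomologicalComplex.pOpcycles _ 0), HomologicalComplex.p_opcyclesMap_assoc,
      P.pOpcycles_comp_fromLeftDerivedZero', P.pOpcycles_comp_fromLeftDerivedZero'_assoc]
    exact (α.naturality (P.π.f 0)).symm
  rw [P.leftDerived_app_eq, P.fromLeftDerivedZero_eq, P.fromLeftDerivedZero_eq]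
  simp only [Category.assoc, Iso.inv_hom_id_assoc]
  erw [HomologicalComplex.homologyι_naturality_assoc, hopcycles]
  congr 1
  exact (Category.assoc _ _ _).symm

end CategoryTheory

universe u

variable {R : Type u} [CommRing R]

namespace CategoryTheory.ShortComplex

noncomputable def tensorChainComplex (X : ShortComplex (ModuleCat.{u} R))
    (K : ChainComplex (ModuleCat.{u} R) ℕ) :
    ShortComplex (ChainComplex (ModuleCat.{u} R) ℕ) where
  X₁ := (((tensoringLeft _).obj X.X₁).mapHomologicalComplex _).obj K
  X₂ := (((tensoringLeft _).obj X.X₂).mapHomologicalComplex _).obj K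
  X₃ := (((tensoringLeft _).obj X.X₃).mapHomologicalComplex _).obj K
  f := (NatTrans.mapHomologicalComplex ((tensoringLeft _).map X.f) _).app K
  g := (NatTrans.mapHomologicalComplex ((tensoringLeft _).map X.g) _).app K
  zero := by
    ext i : 1
    change X.f ▷ K.X i ≫ X.g ▷ K.X i = 0
    rw [← comp_whiskerRight, X.zero, MonoidalPreadditive.zero_whiskerRight]

lemma ShortExact.tensorChainComplex {X : ShortComplex (ModuleCat.{u} R)} (hX : X.ShortExact)
    (K : ChainComplex (ModuleCat.{u} R) ℕ) (hK : ∀ i, Module.Flat R (K.X i)) :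
    (X.tensorChainComplex K).ShortExact := by
  rw [HomologicalComplex.shortExact_iff_degreewise_shortExact]
  intro i
  have := hK i
  exact hX.map_of_exact (tensorRight (K.X i))

lemma ShortExact.isZero_Tor_X₁ {X : ShortComplex (ModuleCat.{u} R)} (hX : X.ShortExact)
    (M : ModuleCat.{u} R) (n : ℕ) (hf : ((Tor (ModuleCat.{u} R) n).map X.f).app M = 0)
    (h : IsZero (((Tor (ModuleCat.{u} R) (n + 1)).obj X.X₃).obj M)) :
    IsZero (((Tor (ModuleCat.{u} R) n).obj X.X₁).obj M) := by
  let P := projectiveResolution M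
  have hP : ∀ i, Module.Flat R (P.complex.X i) := fun i =>
    have : Module.Projective R (P.complex.X i) := (IsProjective.iff_projective _).2 (P.projective i)
    Module.Flat.of_projective
  have hS := hX.tensorChainComplex P.complex hP
  have hzero : HomologicalComplex.homologyMap (X.tensorChainComplex P.complex).f n = 0 := by
    have hf' : (P.isoLeftDerivedObj ((tensoringLeft (ModuleCat.{u} R)).obj X.X₁) n).hom ≫
        HomologicalComplex.homologyMap (X.tensorChainComplex P.complex).f n ≫
          (P.isoLeftDerivedObj ((tensoringLeft (ModuleCat.{u} R)).obj X.X₂) n).inv = 0 :=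
      (P.leftDerived_app_eq ((tensoringLeft (ModuleCat.{u} R)).map X.f) n).symm.trans hf
    rw [Preadditive.IsIso.comp_left_eq_zero] at hf'
    -- `erw`: `homologyMap` lands in `homology`, the isomorphism in `homologyFunctor.obj`
    erw [Iso.comp_inv_eq, zero_comp] at hf'
    exact hf'
  have : Epi (hS.δ (n + 1) n rfl) := (hS.homology_exact₁ (n + 1) n rfl).epi_f hzero
  exact (IsZero.of_epi (hS.δ (n + 1) n rfl) (h.of_iso (P.isoLeftDerivedObj _ (n + 1)).symm)).of_iso
    (P.isoLeftDerivedObj _ n)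

end CategoryTheory.ShortComplex

lemma isZero_Tor_succ_of_flat (A M : ModuleCat.{u} R) [Module.Flat R A] (n : ℕ) :
    IsZero (((Tor (ModuleCat.{u} R) (n + 1)).obj A).obj M) := by
  let P := projectiveResolution M
  refine IsZero.of_iso ?_ (P.isoLeftDerivedObj _ (n + 1))
  refine HomologicalComplex.ExactAt.isZero_homology ?_
  exact ShortComplex.Exact.map (P.complex_exactAt_succ n) (tensorLeft A)

lemma Tor_zero_map_app_eq_zero {A B : ModuleCat.{u} R} (f : A ⟶ B) (M : ModuleCat.{u} R)
    (hf : f ▷ M = 0) : ((Tor (ModuleCat.{u} R) 0).map f).app M = 0 := by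
  refine (Preadditive.IsIso.comp_right_eq_zero _
    (((tensoringLeft (ModuleCat.{u} R)).obj B).fromLeftDerivedZero.app M)).1 ?_
  exact (NatTrans.leftDerived_zero_app_comp_fromLeftDerivedZero _ M).trans
    ((congrArg _ hf).trans comp_zero)

lemma Ideal.smul_top_eq_top_of_isZero_Tor_zero (I : Ideal R) (M : ModuleCat.{u} R)
    (h : IsZero (((Tor (ModuleCat.{u} R) 0).obj (ModuleCat.of R (R ⧸ I))).obj M)) :
    I • (⊤ : Submodule R M) = ⊤ := by
  have : Subsingleton (TensorProduct R (R ⧸ I) M) := (ModuleCat.isZero_iff_subsingleton).1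
    (h.of_iso (((tensoringLeft (ModuleCat.{u} R)).obj _).leftDerivedZeroIsoSelf.app M).symm)
  exact Submodule.Quotient.subsingleton_iff.1
    (TensorProduct.quotTensorEquivQuotSMul M I).symm.toEquiv.subsingleton

noncomputable def quotTorsionOfShortComplex (x : R) : ShortComplex (ModuleCat.{u} R) :=
  ShortComplex.mk
    (ModuleCat.ofHom
      ((Ideal.torsionOf R R x).liftQ (LinearMap.toSpanSingleton R R x) (le_of_eq rfl)))
    (ModuleCat.ofHom (Ideal.span {x}).mkQ) (by
      ext
      change Ideal.Quotient.mk _ (Submodule.liftQ _ _ _ (Submodule.Quotient.mk 1)) = 0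
      rw [Ideal.Quotient.eq_zero_iff_mem, Submodule.liftQ_apply, LinearMap.toSpanSingleton_apply,
        one_smul]
      exact Ideal.mem_span_singleton_self x)

lemma quotTorsionOfShortComplex_shortExact (x : R) :
    (quotTorsionOfShortComplex.{u} x).ShortExact where
  exact := by
    rw [ShortComplex.moduleCat_exact_iff_range_eq_ker]
    exact (Submodule.range_liftQ _ _ _).trans ((LinearMap.span_singleton_eq_range R R x).symm.trans
      (Submodule.ker_mkQ _).symm)
  mono_f := (ModuleCat.mono_iff_injective _).2 <|
    LinearMap.ker_eq_bot.1 (Submodule.ker_liftQ_eq_bot _ _ _ le_rfl)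
  epi_g := (ModuleCat.epi_iff_surjective _).2 (Submodule.mkQ_surjective _)

lemma quotTorsionOfShortComplex_f_whiskerRight_eq_zero (x : R) (M : ModuleCat.{u} R)
    (hM : ∀ m : M, x • m = 0) : (quotTorsionOfShortComplex x).f ▷ M = 0 := by
  refine ModuleCat.hom_ext <| TensorProduct.ext' fun a m => ?_
  obtain ⟨a, rfl⟩ := Submodule.Quotient.mk_surjective _ a
  change ((Submodule.liftQ _ _ _ (Submodule.Quotient.mk a)) ⊗ₜ[R] m : TensorProduct R R M) = 0
  rw [Submodule.liftQ_apply, LinearMap.toSpanSingleton_apply, smul_eq_mul, mul_comm,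
    ← smul_eq_mul, TensorProduct.smul_tmul, hM, TensorProduct.tmul_zero]

lemma isZero_Tor_succ_quotTorsionOf (x : R) (M : ModuleCat.{u} R) (n : ℕ)
    (h : IsZero (((Tor (ModuleCat.{u} R) (n + 2)).obj
      (ModuleCat.of R (R ⧸ Ideal.span {x}))).obj M)) :
    IsZero (((Tor (ModuleCat.{u} R) (n + 1)).obj
      (ModuleCat.of R (R ⧸ Ideal.torsionOf R R x))).obj M) :=
  (quotTorsionOfShortComplex_shortExact x).isZero_Tor_X₁ M (n + 1)
    ((isZero_Tor_succ_of_flat (ModuleCat.of R R) M n).eq_of_tgt _ _) h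

lemma isZero_Tor_zero_quotTorsionOf (x : R) (M : ModuleCat.{u} R) (hM : ∀ m : M, x • m = 0)
    (h : IsZero (((Tor (ModuleCat.{u} R) 1).obj (ModuleCat.of R (R ⧸ Ideal.span {x}))).obj M)) :
    IsZero (((Tor (ModuleCat.{u} R) 0).obj
      (ModuleCat.of R (R ⧸ Ideal.torsionOf R R x))).obj M) :=
  (quotTorsionOfShortComplex_shortExact x).isZero_Tor_X₁ M 0
    (Tor_zero_map_app_eq_zero _ M (quotTorsionOfShortComplex_f_whiskerRight_eq_zero x M hM)) h

lemma isZero_Tor_zero_of_isZero_Tor_odd {x y : R} (hx : Ideal.torsionOf R R x = Ideal.span {y})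
    (hy : Ideal.torsionOf R R y = Ideal.span {x}) (M : ModuleCat.{u} R)
    (hM : ∀ m : M, x • m = 0) (k : ℕ)
    (h : IsZero (((Tor (ModuleCat.{u} R) (2 * k + 1)).obj
      (ModuleCat.of R (R ⧸ Ideal.span {x}))).obj M)) :
    IsZero (((Tor (ModuleCat.{u} R) 0).obj (ModuleCat.of R (R ⧸ Ideal.span {y}))).obj M) := by
  induction k with
  | zero => exact hx ▸ isZero_Tor_zero_quotTorsionOf x M hM h
  | succ k ih =>
    have hEven := hx ▸ isZero_Tor_succ_quotTorsionOf x M (2 * k + 1) h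
    exact ih (hy ▸ isZero_Tor_succ_quotTorsionOf y M (2 * k) hEven)

theorem stmt_5_general (S : Type) [CommRing S] [IsLocalRing S] (x y : S)
    (hym : y ∈ IsLocalRing.maximalIdeal S)
    (hx : Ideal.torsionOf S S x = Ideal.span {y})
    (hy : Ideal.torsionOf S S y = Ideal.span {x})
    (M : Type) [AddCommGroup M] [Module S M] [Module.Finite S M]
    (hxM : ∀ m : M, x • m = 0)
    (htor : ∃ n₀ : ℕ, ∀ n ≥ n₀,
      Subsingleton (((Tor (ModuleCat S) n).obj (ModuleCat.of S (S ⧸ Ideal.span {x}))).obj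
        (ModuleCat.of S M))) :
    ∀ m : M, m = 0 := by
  obtain ⟨n₀, htor⟩ := htor
  have hTor₀ := isZero_Tor_zero_of_isZero_Tor_odd hx hy (ModuleCat.of S M) hxM n₀
    (ModuleCat.isZero_iff_subsingleton.2 (htor (2 * n₀ + 1) (by omega)))
  have hyM := (Ideal.span {y}).smul_top_eq_top_of_isZero_Tor_zero _ hTor₀
  have : Subsingleton M := not_nontrivial_iff_subsingleton.1 fun _ =>
    Submodule.top_ne_ideal_smul_of_le_jacobson_annihilator
      (((Ideal.span_singleton_le_iff_mem _).2 hym).trans (IsLocalRing.maximalIdeal_le_jacobson _))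
      hyM.symm
  exact fun m => Subsingleton.elim m 0

/-- Let `S` be a Noetherian local ring, `(x, y)` a pair of exact zero-divisors lying in the
maximal ideal, and `M` a finitely generated `S`-module with `x • M = 0`.  If
`Tor_n^S(S/(x), M) = 0` for all sufficiently large `n`, then `M = 0`. -/
theorem stmt_5 (S : Type) [CommRing S] [IsNoetherianRing S] [IsLocalRing S] (x y : S)
    (hxm : x ∈ IsLocalRing.maximalIdeal S) (hym : y ∈ IsLocalRing.maximalIdeal S)
    (hx : Ideal.torsionOf S S x = Ideal.span {y})
    (hy : Ideal.torsionOf S S y = Ideal.span {x})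
    (M : Type) [AddCommGroup M] [Module S M] [Module.Finite S M]
    (hxM : ∀ m : M, x • m = 0)
    (htor : ∃ n₀ : ℕ, ∀ n ≥ n₀,
      Subsingleton (((Tor (ModuleCat S) n).obj (ModuleCat.of S (S ⧸ Ideal.span {x}))).obj
        (ModuleCat.of S M))) :
    ∀ m : M, m = 0 :=
  stmt_5_general S x y hym hx hy M hxM htor
end

section
/- Let S be a local ring and (x,y) a pair of exact zero-divisors. Then every nonzero finitely generated module M over R = S/(x) has infinite projective dimension as an S-module. -/
/-! Let `P_•` be a projective resolution of `X` with boundaries `B_j = im d_{j+1} ⊆ P_j`,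
so that `B_j ≅ P_{j+1} / B_{j+1}`. Since `P_{j+1}` is projective, its `x`-torsion is
`Ann(x) P_{j+1} = y P_{j+1}`; a diagram chase then shows that if the `y`-torsion of `B_{j+1}` lies
in `x B_{j+1}`, the `x`-torsion of `B_j` lies in `y B_j`, and symmetrically with `x, y` swapped.
If the resolution is bounded, `B_j = 0` for large `j`, and descending induction reaches
`X = P_0 / B_0`: every `x`-torsion element of `X` is divisible by `y`. For `X = M` killed by `x`
this says `M = y M`, so `M = 0` by Nakayama. -/

open CategoryTheory Submodule
open scoped Pointwise

universe u

variable {S : Type u} [CommRing S]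

theorem Module.Projective.torsionBy_le_torsionOf_smul_top {P : Type*} [AddCommGroup P]
    [Module S P] [Module.Projective S P] (a : S) :
    torsionBy S P a ≤ Ideal.torsionOf S S a • ⊤ := by
  intro p hp
  obtain ⟨s, hs⟩ := Module.projective_def'.mp ‹Module.Projective S P›
  have hcoeff (q : P) : s p q ∈ Ideal.torsionOf S S a := by
    rw [Ideal.mem_torsionOf_iff, smul_eq_mul, mul_comm, ← smul_eq_mul, ← Finsupp.smul_apply,
      ← map_smul, (mem_torsionBy_iff _ _).mp hp, map_zero, Finsupp.zero_apply]
  rw [← LinearMap.id_apply (R := S) p, ← hs, LinearMap.comp_apply,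
    Finsupp.linearCombination_apply]
  exact sum_mem fun q _ => smul_mem_smul (hcoeff q) mem_top

variable {x y : S}

theorem LinearMap.range_inf_torsionBy_le_smul_range
    (hx : Ideal.torsionOf S S x = Ideal.span {y}) {P Q : Type*} [AddCommGroup P] [Module S P]
    [Module.Projective S P] [AddCommGroup Q] [Module S Q] (g : P →ₗ[S] Q)
    (hker : ker g ⊓ torsionBy S P y ≤ x • ker g) :
    range g ⊓ torsionBy S Q x ≤ y • range g := by
  rintro _ ⟨⟨p, rfl⟩, hxp⟩
  have hyx : y * x = 0 := (Ideal.mem_torsionOf_iff x y).mp (hx ▸ Ideal.mem_span_singleton_self y)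
  obtain ⟨k, hk, hxk⟩ := (mem_smul_pointwise_iff_exists _ _ _).mp <| hker
    ⟨LinearMap.mem_ker.mpr (by rwa [map_smul]),
      (mem_torsionBy_iff _ _).mpr (by rw [smul_smul, hyx, zero_smul])⟩
  have hpk : p - k ∈ y • (⊤ : Submodule S P) := by
    rw [← ideal_span_singleton_smul, ← hx]
    exact Module.Projective.torsionBy_le_torsionOf_smul_top x
      ((mem_torsionBy_iff _ _).mpr (by rw [smul_sub, hxk, sub_self]))
  obtain ⟨q, -, hq⟩ := (mem_smul_pointwise_iff_exists _ _ _).mp hpk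
  refine (mem_smul_pointwise_iff_exists _ _ _).mpr ⟨g q, ⟨q, rfl⟩, ?_⟩
  rw [← map_smul, hq, map_sub, LinearMap.mem_ker.mp hk, sub_zero]

namespace CategoryTheory.ProjectiveResolution

variable {X : ModuleCat.{u} S} (P : ProjectiveResolution X)

theorem range_d_inf_torsionBy_le_of_succ (hx : Ideal.torsionOf S S x = Ideal.span {y}) (j : ℕ)
    (h : LinearMap.range (P.complex.d (j + 2) (j + 1)).hom ⊓ torsionBy S _ y ≤
      x • LinearMap.range (P.complex.d (j + 2) (j + 1)).hom) :
    LinearMap.range (P.complex.d (j + 1) j).hom ⊓ torsionBy S _ x ≤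
      y • LinearMap.range (P.complex.d (j + 1) j).hom :=
  LinearMap.range_inf_torsionBy_le_smul_range hx _ ((P.exact_succ j).moduleCat_range_eq_ker ▸ h)

theorem range_d_inf_torsionBy_le_smul (hx : Ideal.torsionOf S S x = Ideal.span {y})
    (hy : Ideal.torsionOf S S y = Ideal.span {x}) {n : ℕ}
    (hP : ∀ i, n ≤ i → Limits.IsZero (P.complex.X i)) (j : ℕ) :
    LinearMap.range (P.complex.d (j + 1) j).hom ⊓ torsionBy S _ x ≤
        y • LinearMap.range (P.complex.d (j + 1) j).hom ∧
      LinearMap.range (P.complex.d (j + 1) j).hom ⊓ torsionBy S _ y ≤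
        x • LinearMap.range (P.complex.d (j + 1) j).hom := by
  induction h : n - j generalizing j with
  | zero =>
    have hd : P.complex.d (j + 1) j = 0 := (hP (j + 1) (by omega)).eq_of_src _ _
    simp [hd]
  | succ k ih =>
    obtain ⟨hxB, hyB⟩ := ih (j + 1) (by omega)
    exact ⟨P.range_d_inf_torsionBy_le_of_succ hx j hyB,
      P.range_d_inf_torsionBy_le_of_succ hy j hxB⟩

theorem torsionBy_le_smul_top (hx : Ideal.torsionOf S S x = Ideal.span {y})
    (hy : Ideal.torsionOf S S y = Ideal.span {x}) {n : ℕ}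
    (hP : ∀ i, n ≤ i → Limits.IsZero (P.complex.X i)) :
    torsionBy S X x ≤ y • ⊤ := by
  have hπ := LinearMap.range_inf_torsionBy_le_smul_range hx (P.π.f 0).hom
    (P.exact₀.moduleCat_range_eq_ker ▸ (P.range_d_inf_torsionBy_le_smul hx hy hP 0).2)
  rwa [LinearMap.range_eq_top.mpr ((ModuleCat.epi_iff_surjective _).mp inferInstance),
    top_inf_eq] at hπ

end CategoryTheory.ProjectiveResolution

theorem stmt_6_general (S : Type) [CommRing S] [IsLocalRing S] (x y : S)
    (hym : y ∈ IsLocalRing.maximalIdeal S)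
    (hx : Ideal.torsionOf S S x = Ideal.span {y})
    (hy : Ideal.torsionOf S S y = Ideal.span {x})
    (M : Type) [AddCommGroup M] [Module S M] [Module.Finite S M] [Nontrivial M]
    (hxM : ∀ m : M, x • m = 0) :
    ¬ ∃ (P : ProjectiveResolution (ModuleCat.of S M)) (n : ℕ),
        ∀ i : ℕ, n ≤ i → Limits.IsZero (P.complex.X i) := by
  rintro ⟨P, n, hP⟩
  have htorsion : torsionBy S M x = ⊤ := eq_top_iff.mpr fun m _ => hxM m
  have hdiv : (⊤ : Submodule S M) = y • ⊤ :=
    (top_le_iff.mp (htorsion ▸ P.torsionBy_le_smul_top hx hy hP)).symm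
  exact top_ne_pointwise_smul_of_mem_jacobson_annihilator
    (IsLocalRing.maximalIdeal_le_jacobson _ hym) hdiv

/-- Let `S` be a Noetherian local ring and `(x, y)` a pair of exact zero-divisors in the maximal
ideal of `S`.  Then every nonzero finitely generated module `M` over `R = S/(x)` (equivalently,
a finitely generated `S`-module with `x • M = 0`) has infinite projective dimension over `S`:
there is no projective resolution of `M` over `S` which vanishes in all sufficiently high
degrees. -/
theorem stmt_6 (S : Type) [CommRing S] [IsNoetherianRing S] [IsLocalRing S] (x y : S)
    (hxm : x ∈ IsLocalRing.maximalIdeal S) (hym : y ∈ IsLocalRing.maximalIdeal S)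
    (hx : Ideal.torsionOf S S x = Ideal.span {y})
    (hy : Ideal.torsionOf S S y = Ideal.span {x})
    (M : Type) [AddCommGroup M] [Module S M] [Module.Finite S M] [Nontrivial M]
    (hxM : ∀ m : M, x • m = 0) :
    ¬ ∃ (P : ProjectiveResolution (ModuleCat.of S M)) (n : ℕ),
        ∀ i : ℕ, n ≤ i → Limits.IsZero (P.complex.X i) :=
  stmt_6_general S x y hym hx hy M hxM
end

section
/- Let S be a commutative ring, x ∈ S with Ann_S(x) = (x), and R = S/(x). Let F, G be free S-modules and ∂̃₂ : F → G, ∂̃₁ : G → H be S-linear maps between free S-modules such that (∂̃₁ ∘ ∂̃₂)(F) ⊆ x·H. Then there exists an S-linear map s̃ : F → H with ∂̃₁ ∘ ∂̃₂ = x·s̃, and moreover the induced map s = s̃ ⊗_S R : F⊗R → H⊗R is independent of the choice of s̃. -/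
/-! A map out of a projective module whose values are all divisible by `x` lifts along the
surjection `H → x • H`, which gives the factorization. Two factorizations differ by a map
with values killed by `x`; in a basis of the free module `H` the coordinates of such a value
lie in `Ann(x) = (x)`, so the difference lies in `x • H`. -/

theorem LinearMap.exists_eq_smul_of_forall_mem_range_lsmul {S F H : Type*} [CommSemiring S]
    [AddCommMonoid F] [Module S F] [Module.Projective S F] [AddCommMonoid H] [Module S H]
    {x : S} (f : F →ₗ[S] H) (hf : ∀ v, f v ∈ LinearMap.range (LinearMap.lsmul S H x)) :
    ∃ s : F →ₗ[S] H, f = x • s := by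
  obtain ⟨s, hs⟩ := Module.projective_lifting_property (LinearMap.lsmul S H x).rangeRestrict
    (f.codRestrict _ hf) (LinearMap.surjective_rangeRestrict _)
  exact ⟨s, LinearMap.ext fun v => congrArg Subtype.val (LinearMap.congr_fun hs v).symm⟩

theorem ker_lsmul_le_range_lsmul {S H : Type*} [CommRing S] [AddCommGroup H] [Module S H]
    [Module.Free S H] {x : S} (hx : Ideal.torsionOf S S x ≤ Ideal.span {x}) :
    LinearMap.ker (LinearMap.lsmul S H x) ≤ LinearMap.range (LinearMap.lsmul S H x) := by
  intro w hw
  let b := Module.Free.chooseBasis S H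
  have hcoeff : ∀ i, b.repr w i ∈ Ideal.span {x} := fun i => hx <| by
    rw [Ideal.mem_torsionOf_iff, smul_eq_mul, mul_comm, ← smul_eq_mul, ← Finsupp.smul_apply,
      ← map_smul, ← LinearMap.lsmul_apply, hw, map_zero, Finsupp.zero_apply]
  have hmem : w ∈ Ideal.span {x} • Submodule.span S (Set.range b) :=
    (Submodule.mem_ideal_smul_span_iff_exists_sum _ _ _).mpr
      ⟨b.repr w, hcoeff, by rw [← Finsupp.linearCombination_apply, b.linearCombination_repr]⟩
  rw [b.span_eq, Submodule.ideal_span_singleton_smul,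
    Submodule.mem_smul_pointwise_iff_exists] at hmem
  obtain ⟨y, -, hy⟩ := hmem
  exact ⟨y, hy⟩

theorem stmt_9_general (S : Type*) [CommRing S] (x : S)
    (hx : Ideal.torsionOf S S x = Ideal.span {x})
    (F G H : Type*) [AddCommGroup F] [Module S F] [Module.Free S F]
    [AddCommGroup G] [Module S G]
    [AddCommGroup H] [Module S H] [Module.Free S H]
    (d₂ : F →ₗ[S] G) (d₁ : G →ₗ[S] H)
    (hd : ∀ v : F, d₁ (d₂ v) ∈ LinearMap.range (LinearMap.lsmul S H x)) :
    (∃ s : F →ₗ[S] H, d₁ ∘ₗ d₂ = x • s) ∧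
    ∀ s t : F →ₗ[S] H, d₁ ∘ₗ d₂ = x • s → d₁ ∘ₗ d₂ = x • t →
      ∀ v : F, s v - t v ∈ LinearMap.range (LinearMap.lsmul S H x) := by
  refine ⟨(d₁ ∘ₗ d₂).exists_eq_smul_of_forall_mem_range_lsmul hd, fun s t hs ht v => ?_⟩
  apply ker_lsmul_le_range_lsmul hx.le
  rw [LinearMap.mem_ker, LinearMap.lsmul_apply, smul_sub, ← LinearMap.smul_apply,
    ← LinearMap.smul_apply, ← hs, ← ht, sub_self]

/-- Let `S` be a commutative ring, `x ∈ S` with `Ann_S(x) = (x)`, and let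
`∂̃₂ : F → G`, `∂̃₁ : G → H` be `S`-linear maps between free `S`-modules such that the
composite `∂̃₁ ∘ ∂̃₂` takes values in `x • H`.  Then there exists an `S`-linear map
`s̃ : F → H` with `∂̃₁ ∘ ∂̃₂ = x • s̃`, and moreover any two such factorizations agree
modulo `x • H` (so the induced map `F ⊗ S/(x) → H ⊗ S/(x)` is independent of the choice). -/
theorem stmt_9 (S : Type*) [CommRing S] (x : S)
    (hx : Ideal.torsionOf S S x = Ideal.span {x})
    (F G H : Type*) [AddCommGroup F] [Module S F] [Module.Free S F]
    [AddCommGroup G] [Module S G] [Module.Free S G]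
    [AddCommGroup H] [Module S H] [Module.Free S H]
    (d₂ : F →ₗ[S] G) (d₁ : G →ₗ[S] H)
    (hd : ∀ v : F, d₁ (d₂ v) ∈ LinearMap.range (LinearMap.lsmul S H x)) :
    (∃ s : F →ₗ[S] H, d₁ ∘ₗ d₂ = x • s) ∧
    ∀ s t : F →ₗ[S] H, d₁ ∘ₗ d₂ = x • s → d₁ ∘ₗ d₂ = x • t →
      ∀ v : F, s v - t v ∈ LinearMap.range (LinearMap.lsmul S H x) :=
  stmt_9_general S x hx F G H d₂ d₁ hd
end

section
/- Let S be a commutative ring with x ∈ S satisfying Ann_S(x) = (x), and let R = S/(x). Let (F, ∂) be a chain complex of finitely generated free R-modules, and let (F̃, ∂̃) be a preimage over S (free S-modules with F̃ ⊗_S R ≅ F compatibly). Writing ∂̃_{i-1}∂̃_i = x·s̃_i and setting s_i = s̃_i ⊗_S R, the family s = {s_i} is a chain endomorphism of F of degree −2, i.e. s_{i-1} ∘ ∂_i = ∂_{i-2} ∘ s_i for all i. -/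
/-! The obstruction `s̃ (i-1) ∘ ∂̃ i - ∂̃ (i-2) ∘ s̃ i` is killed by `x`, since multiplying it by `x`
gives `∂̃ ∂̃ ∂̃ - ∂̃ ∂̃ ∂̃ = 0`. On a free `S`-module `Ann(x) = (x)` holds coordinatewise, so an element
killed by `x` is a multiple of `x`, i.e. the obstruction vanishes modulo `x`. -/

lemma dvd_of_mul_eq_zero_of_torsionOf_eq_span {S : Type*} [CommRing S] {x a : S}
    (hx : Ideal.torsionOf S S x = Ideal.span {x}) (ha : x * a = 0) : x ∣ a := by
  rw [← Ideal.mem_span_singleton, ← hx, Ideal.mem_torsionOf_iff, smul_eq_mul, mul_comm, ha]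

lemma mem_range_lsmul_of_smul_eq_zero {S M : Type*} [CommRing S] [AddCommGroup M] [Module S M]
    [Module.Free S M] {x : S} (hx : Ideal.torsionOf S S x = Ideal.span {x})
    {w : M} (hw : x • w = 0) : w ∈ LinearMap.range (LinearMap.lsmul S M x) := by
  let b := Module.Free.chooseBasis S M
  have hcoord : ∀ j, ∃ c, b.repr w j = x * c := fun j =>
    dvd_of_mul_eq_zero_of_torsionOf_eq_span hx (by simpa using congrArg (b.repr · j) hw)
  choose c hc using hcoord
  refine ⟨∑ j ∈ (b.repr w).support, c j • b j, ?_⟩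
  calc x • ∑ j ∈ (b.repr w).support, c j • b j
      = ∑ j ∈ (b.repr w).support, b.repr w j • b j := by
        simp only [Finset.smul_sum, smul_smul, hc]
    _ = w := b.linearCombination_repr w

theorem stmt_10_general (S : Type*) [CommRing S] (x : S)
    (hx : Ideal.torsionOf S S x = Ideal.span {x})
    (F : ℤ → Type*) [∀ i, AddCommGroup (F i)] [∀ i, Module S (F i)]
    [∀ i, Module.Free S (F i)]
    (d : ∀ i : ℤ, F i →ₗ[S] F (i - 1))
    (s : ∀ i : ℤ, F i →ₗ[S] F (i - 1 - 1))
    (hs : ∀ i : ℤ, (d (i - 1)) ∘ₗ (d i) = x • s i) :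
    ∀ (i : ℤ) (v : F i),
      s (i - 1) (d i v) - d (i - 1 - 1) (s i v) ∈
        LinearMap.range (LinearMap.lsmul S (F (i - 1 - 1 - 1)) x) := by
  intro i v
  apply mem_range_lsmul_of_smul_eq_zero hx
  have hleft : x • s (i - 1) (d i v) = d (i - 1 - 1) (d (i - 1) (d i v)) := by
    simpa using (LinearMap.congr_fun (hs (i - 1)) (d i v)).symm
  have hright : x • d (i - 1 - 1) (s i v) = d (i - 1 - 1) (d (i - 1) (d i v)) := by
    simpa using congrArg (d (i - 1 - 1)) (LinearMap.congr_fun (hs i) v).symm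
  rw [smul_sub, hleft, hright, sub_self]

/-- Let `S` be a commutative ring with `x ∈ S` satisfying `Ann_S(x) = (x)`.  Let `(F̃, ∂̃)` be a
preimage over `S` of a chain complex of finitely generated free `R = S/(x)`-modules: a family of
finitely generated free `S`-modules `F̃ i` and `S`-linear maps `∂̃ i : F̃ i → F̃ (i-1)` whose
composites `∂̃ (i-1) ∘ ∂̃ i` factor as `x • s̃ i`.  Then the family `s = {s̃ i mod x}` is a chain
endomorphism of degree `-2` of the reduced complex: for all `i` and `v`,
`s̃ (i-1) (∂̃ i v) - ∂̃ (i-1-1) (s̃ i v) ∈ x • F̃ (i-1-1-1)`, i.e. `s_{i-1} ∘ ∂_i = ∂_{i-2} ∘ s_i`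
over `R`. -/
theorem stmt_10 (S : Type*) [CommRing S] (x : S)
    (hx : Ideal.torsionOf S S x = Ideal.span {x})
    (F : ℤ → Type*) [∀ i, AddCommGroup (F i)] [∀ i, Module S (F i)]
    [∀ i, Module.Free S (F i)] [∀ i, Module.Finite S (F i)]
    (d : ∀ i : ℤ, F i →ₗ[S] F (i - 1))
    (s : ∀ i : ℤ, F i →ₗ[S] F (i - 1 - 1))
    (hs : ∀ i : ℤ, (d (i - 1)) ∘ₗ (d i) = x • s i) :
    ∀ (i : ℤ) (v : F i),
      s (i - 1) (d i v) - d (i - 1 - 1) (s i v) ∈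
        LinearMap.range (LinearMap.lsmul S (F (i - 1 - 1 - 1)) x) :=
  stmt_10_general S x hx F d s hs
end

section
/- Let S = k[x,y,z]/(x²,y²,z²,yz) over a field k. Then (x̄, x̄) is a pair of exact zero-divisors in S: Ann_S(x̄) = (x̄), and S/(x̄) ≅ k[y,z]/(y,z)². -/
/-!
Via `finSuccEquiv`, `S ≅ A[X]/(X², I)` with `A = k[y,z]` and `I = (y², yz, z²)`.
In `A[X]/(X², I)` the coefficient of `X` in `f * X` is the constant coefficient of `f`, so
`f * X ∈ (X², I)` forces `f ∈ (X, I)`: hence `Ann(X̄) = (X̄)`, and the quotient by `X̄` is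
`A[X]/(X, I) ≅ A/I`.
-/

open Polynomial

theorem Ideal.torsionOf_map_ringEquiv {R S E : Type*} [CommRing R] [CommRing S]
    [EquivLike E R S] [RingEquivClass E R S] (e : E) (a : R) :
    Ideal.torsionOf S S (e a) = (Ideal.torsionOf R R a).map e := by
  ext s
  obtain ⟨r, rfl⟩ := EquivLike.surjective e s
  simp only [Ideal.mem_map_of_equiv, Ideal.mem_torsionOf_iff, smul_eq_mul, ← map_mul,
    map_eq_zero_iff e (EquivLike.injective e), EmbeddingLike.apply_eq_iff_eq, exists_eq_right]

namespace Polynomial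

variable {A : Type*} [CommRing A] (I : Ideal A)

theorem mem_span_X_sup_map_C_iff {f : A[X]} :
    f ∈ Ideal.span {X} ⊔ I.map C ↔ f.coeff 0 ∈ I := by
  constructor
  · intro h
    obtain ⟨p, hp, q, hq, rfl⟩ := Submodule.mem_sup.mp h
    obtain ⟨r, rfl⟩ := Ideal.mem_span_singleton.mp hp
    simpa using Ideal.mem_map_C_iff.mp hq 0
  · intro h
    rw [← sub_add_cancel f (C (f.coeff 0))]
    exact Ideal.add_mem _ (Ideal.mem_sup_left (Ideal.mem_span_singleton.mpr X_dvd_sub_C))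
      (Ideal.mem_sup_right (Ideal.mem_map_of_mem _ h))

theorem coeff_one_mem_of_mem_span_X_sq_sup_map_C {f : A[X]}
    (h : f ∈ Ideal.span {X ^ 2} ⊔ I.map C) : f.coeff 1 ∈ I := by
  obtain ⟨p, hp, q, hq, rfl⟩ := Submodule.mem_sup.mp h
  obtain ⟨r, rfl⟩ := Ideal.mem_span_singleton.mp hp
  simpa [coeff_X_pow_mul'] using Ideal.mem_map_C_iff.mp hq 1

theorem torsionOf_mk_X_of_span_X_sq_sup_map_C :
    Ideal.torsionOf (A[X] ⧸ Ideal.span {X ^ 2} ⊔ I.map C) _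
        (Ideal.Quotient.mk (Ideal.span {X ^ 2} ⊔ I.map C) X) =
      Ideal.span {Ideal.Quotient.mk (Ideal.span {X ^ 2} ⊔ I.map C) X} := by
  set J := Ideal.span {(X : A[X]) ^ 2} ⊔ I.map C
  ext g
  obtain ⟨f, rfl⟩ := Ideal.Quotient.mk_surjective g
  rw [Ideal.mem_torsionOf_iff, smul_eq_mul, ← map_mul, Ideal.Quotient.eq_zero_iff_mem]
  constructor
  · intro h
    have hf : f ∈ Ideal.span {X} ⊔ I.map C := by
      rw [mem_span_X_sup_map_C_iff, ← coeff_mul_X]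
      exact coeff_one_mem_of_mem_span_X_sq_sup_map_C I h
    have hle : Ideal.span {X} ⊔ I.map C ≤ (Ideal.span {Ideal.Quotient.mk J X}).comap
        (Ideal.Quotient.mk J) := by
      refine sup_le ?_ ?_
      · rw [Ideal.span_le, Set.singleton_subset_iff]
        exact Ideal.mem_span_singleton_self _
      · intro q hq
        rw [Ideal.mem_comap, Ideal.Quotient.eq_zero_iff_mem.mpr (Ideal.mem_sup_right hq)]
        exact zero_mem _
    exact hle hf
  · intro h
    obtain ⟨c, hc⟩ := Ideal.mem_span_singleton'.mp h
    rw [← Ideal.Quotient.eq_zero_iff_mem, map_mul, ← hc, mul_assoc, ← map_mul, ← sq,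
      Ideal.Quotient.eq_zero_iff_mem.mpr (Ideal.mem_sup_left (Ideal.mem_span_singleton_self _)),
      mul_zero]

theorem span_X_sq_sup_map_C_sup_span_X :
    Ideal.span {X ^ 2} ⊔ I.map C ⊔ Ideal.span {X} = Ideal.span {X} ⊔ I.map C := by
  have h : Ideal.span {(X : A[X]) ^ 2} ≤ Ideal.span {X} :=
    Ideal.span_singleton_le_span_singleton.mpr (dvd_pow_self X two_ne_zero)
  rw [sup_right_comm, sup_eq_right.mpr h]

noncomputable def quotQuotMkXAlgEquiv :
    ((A[X] ⧸ Ideal.span {X ^ 2} ⊔ I.map C) ⧸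
        Ideal.span {Ideal.Quotient.mk (Ideal.span {X ^ 2} ⊔ I.map C) X}) ≃ₐ[A] A ⧸ I :=
  let ψ : A[X] →ₐ[A] A ⧸ I := (Ideal.Quotient.mkₐ A I).comp (aeval 0)
  have hψ : Function.Surjective ψ := fun a ↦ by
    obtain ⟨a, rfl⟩ := Ideal.Quotient.mk_surjective a
    exact ⟨C a, by simp [ψ]⟩
  have hker : Ideal.span {X ^ 2} ⊔ I.map C ⊔ Ideal.span {X} = RingHom.ker ψ := by
    ext f
    rw [span_X_sq_sup_map_C_sup_span_X, mem_span_X_sup_map_C_iff, RingHom.mem_ker,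
      coeff_zero_eq_aeval_zero]
    simp [ψ, Ideal.Quotient.eq_zero_iff_mem]
  (Ideal.quotientEquivAlgOfEq A (by rw [Ideal.map_span, Set.image_singleton]; rfl)).trans <|
    (DoubleQuot.quotQuotEquivQuotSupₐ A _ (Ideal.span {X})).trans <|
      (Ideal.quotientEquivAlgOfEq A hker).trans (Ideal.quotientKerAlgEquivOfSurjective hψ)

theorem exactZeroDivisor_of_algEquiv {R S : Type*} [CommRing R] [Algebra R A] [CommRing S]
    [Algebra R S] (Φ : (A[X] ⧸ Ideal.span {X ^ 2} ⊔ I.map C) ≃ₐ[R] S) :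
    Ideal.torsionOf S S (Φ (Ideal.Quotient.mk _ X)) = Ideal.span {Φ (Ideal.Quotient.mk _ X)} ∧
      Nonempty ((S ⧸ Ideal.span {Φ (Ideal.Quotient.mk _ X)}) ≃ₐ[R] A ⧸ I) := by
  refine ⟨?_, ⟨?_⟩⟩
  · rw [Ideal.torsionOf_map_ringEquiv Φ, torsionOf_mk_X_of_span_X_sq_sup_map_C, Ideal.map_span,
      Set.image_singleton]
  · exact (Ideal.quotientEquivAlg _ _ Φ.symm (by simp [Ideal.map_span])).trans
      ((quotQuotMkXAlgEquiv I).restrictScalars R)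

end Polynomial

open MvPolynomial

theorem map_finSuccEquiv_span_eq (k : Type*) [CommRing k] :
    (Ideal.span {X 0 ^ 2, X 1 ^ 2, X 2 ^ 2, X 1 * X 2} : Ideal (MvPolynomial (Fin 3) k)).map
        (finSuccEquiv k 2 : MvPolynomial (Fin 3) k →+* _) =
      Ideal.span {Polynomial.X ^ 2} ⊔
        (Ideal.span {X 0 ^ 2, X 0 * X 1, X 1 ^ 2} : Ideal (MvPolynomial (Fin 2) k)).map
          Polynomial.C := by
  have h1 := finSuccEquiv_X_succ (R := k) (n := 2) (j := 0)
  have h2 := finSuccEquiv_X_succ (R := k) (n := 2) (j := 1)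
  rw [Fin.succ_zero_eq_one] at h1
  rw [Fin.succ_one_eq_two] at h2
  rw [Ideal.map_span, Ideal.map_span, ← Ideal.span_union]
  congr 1
  simp only [Set.image_insert_eq, Set.image_singleton, RingHom.coe_coe, map_pow, map_mul,
    finSuccEquiv_X_zero, h1, h2]
  rw [Set.singleton_union, Set.pair_comm]

/-- Let `S = k[x,y,z]/(x², y², z², yz)` over a field `k` and let `x̄` be the image of `x` in
`S`.  Then `(x̄, x̄)` is a pair of exact zero-divisors in `S`: `Ann_S(x̄) = (x̄)`; and moreover
`S/(x̄) ≅ k[y,z]/(y,z)² = k[y,z]/(y², yz, z²)` as `k`-algebras. -/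
theorem stmt_19 (k : Type) [Field k]
    (S : Type) [CommRing S] [Algebra k S]
    (φ : (MvPolynomial (Fin 3) k ⧸
      Ideal.span {(MvPolynomial.X 0 : MvPolynomial (Fin 3) k) ^ 2,
        (MvPolynomial.X 1 : MvPolynomial (Fin 3) k) ^ 2,
        (MvPolynomial.X 2 : MvPolynomial (Fin 3) k) ^ 2,
        (MvPolynomial.X 1 : MvPolynomial (Fin 3) k) * MvPolynomial.X 2}) ≃ₐ[k] S)
    (xb : S)
    (hxb : xb = φ (Ideal.Quotient.mk _ (MvPolynomial.X 0))) :
    Ideal.torsionOf S S xb = Ideal.span {xb} ∧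
    Nonempty ((S ⧸ Ideal.span {xb}) ≃ₐ[k]
      (MvPolynomial (Fin 2) k ⧸
        Ideal.span {(MvPolynomial.X 0 : MvPolynomial (Fin 2) k) ^ 2,
          (MvPolynomial.X 0 : MvPolynomial (Fin 2) k) * MvPolynomial.X 1,
          (MvPolynomial.X 1 : MvPolynomial (Fin 2) k) ^ 2})) := by
  set Φ := (Ideal.quotientEquivAlg _ _ (finSuccEquiv k 2)
    (map_finSuccEquiv_span_eq k).symm).symm.trans φ
  have hΦ : Φ (Ideal.Quotient.mk _ Polynomial.X) = xb := by
    rw [hxb, AlgEquiv.trans_apply, EmbeddingLike.apply_eq_iff_eq, AlgEquiv.symm_apply_eq,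
      Ideal.quotientEquivAlg_mk, finSuccEquiv_X_zero]
  subst hΦ
  exact Polynomial.exactZeroDivisor_of_algEquiv _ Φ
end
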